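/- arXiv:2004.07810 — 3 statements merged into one kernel-verified Lean document; each statement's English description precedes it below -/
import Mathlib

section
/- Let A ∈ R^{n×n}, B ∈ R^{n×m}, w ∈ R, and suppose x_s, x_c ∈ R^n, u_s, u_c ∈ R^m satisfy x_s·cos(w) − x_c·sin(w) = A x_s + B u_s and x_s·sin(w) + x_c·cos(w) = A x_c + B u_c. Define x_s⁺ = A x_s + B u_s, x_c⁺ = A x_c + B u_c, u_s⁺ = u_s·cos(w) − u_c·sin(w), u_c⁺ = u_s·sin(w) + u_c·cos(w). Then A x_s⁺ + B u_s⁺ = x_s⁺·cos(w) − x_c⁺·sin(w) and A x_c⁺ + B u_c⁺ = x_s⁺·sin(w) + x_c⁺·cos(w). -/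
theorem shifted_harmonic_constraints (n m : ℕ) (w : ℝ)
    (A : Matrix (Fin n) (Fin n) ℝ) (B : Matrix (Fin n) (Fin m) ℝ)
    (xs xc : Fin n → ℝ) (us uc : Fin m → ℝ)
    (hxs : Real.cos w • xs - Real.sin w • xc = A.mulVec xs + B.mulVec us)
    (hxc : Real.sin w • xs + Real.cos w • xc = A.mulVec xc + B.mulVec uc)
    (xsp xcp : Fin n → ℝ) (usp ucp : Fin m → ℝ)
    (hxsp : xsp = A.mulVec xs + B.mulVec us)
    (hxcp : xcp = A.mulVec xc + B.mulVec uc)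
    (husp : usp = Real.cos w • us - Real.sin w • uc)
    (hucp : ucp = Real.sin w • us + Real.cos w • uc) :
    A.mulVec xsp + B.mulVec usp = Real.cos w • xsp - Real.sin w • xcp ∧
    A.mulVec xcp + B.mulVec ucp = Real.sin w • xsp + Real.cos w • xcp := by
  have hxs' : xsp = Real.cos w • xs - Real.sin w • xc := by rw [hxsp, ← hxs]
  have hxc' : xcp = Real.sin w • xs + Real.cos w • xc := by rw [hxcp, ← hxc]
  subst husp hucp
  rw [hxs', hxc']
  constructor
  · funext i
    have hs := congrFun hxs i
    have hc := congrFun hxc i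
    simp only [Matrix.mulVec_sub, Matrix.mulVec_add, Matrix.mulVec_smul,
      Pi.add_apply, Pi.sub_apply, Pi.smul_apply, smul_eq_mul] at *
    linear_combination - Real.cos w * hs + Real.sin w * hc
  · funext i
    have hs := congrFun hxs i
    have hc := congrFun hxc i
    simp only [Matrix.mulVec_sub, Matrix.mulVec_add, Matrix.mulVec_smul,
      Pi.add_apply, Pi.sub_apply, Pi.smul_apply, smul_eq_mul] at *
    linear_combination - Real.sin w * hs - Real.cos w * hc
end

section
/- Let C ∈ R^{p×n}, D ∈ R^{p×m}, A ∈ R^{n×n}, B ∈ R^{n×m}, w ∈ R. Given x_e, x_s, x_c ∈ R^n and u_e, u_s, u_c ∈ R^m satisfying x_e = A x_e + B u_e, x_s·cos(w) − x_c·sin(w) = A x_s + B u_s, and x_s·sin(w) + x_c·cos(w) = A x_c + B u_c, define z_e = C x_e + D u_e, z_s = C x_s + D u_s, z_c = C x_c + D u_c. Define the shifted variables x_e⁺ = A x_e + B u_e, x_s⁺ = A x_s + B u_s, x_c⁺ = A x_c + B u_c, u_e⁺ = u_e, u_s⁺ = u_s·cos(w) − u_c·sin(w), u_c⁺ = u_s·sin(w)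 + u_c·cos(w), and z_e⁺ = C x_e⁺ + D u_e⁺, z_s⁺ = C x_s⁺ + D u_s⁺, z_c⁺ = C x_c⁺ + D u_c⁺. Then z_e⁺ = z_e, z_s⁺ = z_s·cos(w) − z_c·sin(w), z_c⁺ = z_s·sin(w) + z_c·cos(w), and consequently for every component index i, (z_s⁺)_i² + (z_c⁺)_i² = (z_s)_i² + (z_c)_i². -/
theorem shifted_output_harmonics (n m p : ℕ) (w : ℝ)
    (A : Matrix (Fin n) (Fin n) ℝ) (B : Matrix (Fin n) (Fin m) ℝ)
    (C : Matrix (Fin p) (Fin n) ℝ) (D : Matrix (Fin p) (Fin m) ℝ)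
    (xe xs xc : Fin n → ℝ) (ue us uc : Fin m → ℝ)
    (hxe : xe = A.mulVec xe + B.mulVec ue)
    (hxs : Real.cos w • xs - Real.sin w • xc = A.mulVec xs + B.mulVec us)
    (hxc : Real.sin w • xs + Real.cos w • xc = A.mulVec xc + B.mulVec uc)
    (ze zs zc : Fin p → ℝ)
    (hze : ze = C.mulVec xe + D.mulVec ue)
    (hzs : zs = C.mulVec xs + D.mulVec us)
    (hzc : zc = C.mulVec xc + D.mulVec uc)
    (xep xsp xcp : Fin n → ℝ) (uep usp ucp : Fin m → ℝ)
    (hxep : xep = A.mulVec xe + B.mulVec ue)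
    (hxsp : xsp = A.mulVec xs + B.mulVec us)
    (hxcp : xcp = A.mulVec xc + B.mulVec uc)
    (huep : uep = ue)
    (husp : usp = Real.cos w • us - Real.sin w • uc)
    (hucp : ucp = Real.sin w • us + Real.cos w • uc)
    (zep zsp zcp : Fin p → ℝ)
    (hzep : zep = C.mulVec xep + D.mulVec uep)
    (hzsp : zsp = C.mulVec xsp + D.mulVec usp)
    (hzcp : zcp = C.mulVec xcp + D.mulVec ucp) :
    zep = ze ∧
    zsp = Real.cos w • zs - Real.sin w • zc ∧
    zcp = Real.sin w • zs + Real.cos w • zc ∧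
    ∀ i : Fin p, (zsp i) ^ 2 + (zcp i) ^ 2 = (zs i) ^ 2 + (zc i) ^ 2 := by
  have h1 : zep = ze := by rw [hzep, hxep, huep, hze, ← hxe]
  have h2 : zsp = Real.cos w • zs - Real.sin w • zc := by
    rw [hzsp, hxsp, husp, ← hxs, hzs, hzc]
    simp [Matrix.mulVec_add, Matrix.mulVec_sub, Matrix.mulVec_smul, smul_add, smul_sub]
    abel
  have h3 : zcp = Real.sin w • zs + Real.cos w • zc := by
    rw [hzcp, hxcp, hucp, ← hxc, hzs, hzc]
    simp [Matrix.mulVec_add, Matrix.mulVec_sub, Matrix.mulVec_smul, smul_add, smul_sub]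
    abel
  refine ⟨h1, h2, h3, fun i => ?_⟩
  have hc := Real.sin_sq_add_cos_sq w
  simp only [h2, h3, Pi.sub_apply, Pi.add_apply, Pi.smul_apply, smul_eq_mul]
  nlinarith [hc]
end

section
/- Let V: R^n → R be defined by V(y) = ‖y_e − r‖²_{T} + ‖y_s‖²_{T_h} + ‖y_c‖²_{T_h} where y = (y_e, y_s, y_c) ∈ R^{n₁} × R^{n₁} × R^{n₁}, T and T_h are positive definite matrices, and r ∈ R^{n₁} is fixed. Suppose K ⊆ R^{3n₁} is a convex set that is closed under the projection (y_e, y_s, y_c) ↦ (y_e, 0, 0), i.e., y ∈ K implies (y_e, 0, 0) ∈ K. Then any minimizer y° of V over K satisfies y_s° = 0 and y_c° = 0. -/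
open Matrix

theorem optimal_artificial_reference_is_equilibrium (n₁ : ℕ)
    (T Th : Matrix (Fin n₁) (Fin n₁) ℝ)
    (hT : T.PosDef) (hTh : Th.PosDef) (r : Fin n₁ → ℝ)
    (V : (Fin n₁ → ℝ) × (Fin n₁ → ℝ) × (Fin n₁ → ℝ) → ℝ)
    (hV : ∀ y, V y = (y.1 - r) ⬝ᵥ T.mulVec (y.1 - r)
        + y.2.1 ⬝ᵥ Th.mulVec y.2.1 + y.2.2 ⬝ᵥ Th.mulVec y.2.2)
    (K : Set ((Fin n₁ → ℝ) × (Fin n₁ → ℝ) × (Fin n₁ → ℝ)))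
    (hconv : Convex ℝ K)
    (hproj : ∀ y ∈ K, (y.1, (0 : Fin n₁ → ℝ), (0 : Fin n₁ → ℝ)) ∈ K)
    (yopt : (Fin n₁ → ℝ) × (Fin n₁ → ℝ) × (Fin n₁ → ℝ))
    (hmem : yopt ∈ K) (hmin : ∀ y ∈ K, V yopt ≤ V y) :
    yopt.2.1 = 0 ∧ yopt.2.2 = 0 := by
  have hmemp := hproj yopt hmem
  have hle := hmin _ hmemp
  rw [hV, hV] at hle
  simp only [Matrix.mulVec_zero, dotProduct_zero, add_zero] at hle
  have hkey : yopt.2.1 ⬝ᵥ Th.mulVec yopt.2.1 + yopt.2.2 ⬝ᵥ Th.mulVec yopt.2.2 ≤ 0 := by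
    linarith
  have pos : ∀ v : Fin n₁ → ℝ, 0 ≤ v ⬝ᵥ Th.mulVec v := by
    intro v
    rcases eq_or_ne v 0 with h | h
    · simp [h]
    · have := hTh.dotProduct_mulVec_pos h
      simpa using this.le
  have h1 : yopt.2.1 ⬝ᵥ Th.mulVec yopt.2.1 = 0 := le_antisymm (by linarith [pos yopt.2.2]) (pos _)
  have h2 : yopt.2.2 ⬝ᵥ Th.mulVec yopt.2.2 = 0 := le_antisymm (by linarith [pos yopt.2.1]) (pos _)
  constructor
  · by_contra h
    have := hTh.dotProduct_mulVec_pos h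
    simp only [RCLike.re_to_real, star_trivial] at this
    linarith
  · by_contra h
    have := hTh.dotProduct_mulVec_pos h
    simp only [RCLike.re_to_real, star_trivial] at this
    linarith
end
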